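/- arXiv:2009.12718 — 3 statements merged into one kernel-verified Lean document; each statement's English description precedes it below -/
import Mathlib

section
/- Let b > 0, Δ > 0, d ≥ 0 be real numbers and let g be a real number with g ≥ -2Δ. Then exp(-exp(-(g + 2d)/b)) ≤ exp((2/b) · exp(2Δ/b) · d) · exp(-exp(-g/b)). -/
open Real

theorem exp_neg_exp_neg_add_le {y t M : ℝ} (ht : 0 ≤ t) (hy : exp (-y) ≤ M) :
    exp (-exp (-(y + t))) ≤ exp (M * t) * exp (-exp (-y)) := by
  rw [← exp_add, exp_le_exp, neg_add, exp_add]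
  have hgap : 1 - exp (-t) ≤ t := by linarith [one_sub_le_exp_neg t]
  calc -(exp (-y) * exp (-t)) = exp (-y) * (1 - exp (-t)) - exp (-y) := by ring
    _ ≤ exp (-y) * t - exp (-y) := by gcongr
    _ ≤ M * t + -exp (-y) := by nlinarith

theorem stmt_0_general (b Δ d g : ℝ) (hb : 0 < b) (hd : 0 ≤ d)
    (hg : -(2 * Δ) ≤ g) :
    Real.exp (-Real.exp (-((g + 2 * d) / b))) ≤
      Real.exp ((2 / b) * Real.exp (2 * Δ / b) * d) *
        Real.exp (-Real.exp (-(g / b))) := by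
  have hdensity : exp (-(g / b)) ≤ exp (2 * Δ / b) := by
    rw [exp_le_exp, ← neg_div]
    exact div_le_div_of_nonneg_right (by linarith) hb.le
  have hrate : 2 / b * exp (2 * Δ / b) * d = exp (2 * Δ / b) * (2 * d / b) := by ring
  rw [add_div, hrate]
  exact exp_neg_exp_neg_add_le (by positivity) hdensity

theorem stmt_0 (b Δ d g : ℝ) (hb : 0 < b) (hΔ : 0 < Δ) (hd : 0 ≤ d)
    (hg : -(2 * Δ) ≤ g) :
    Real.exp (-Real.exp (-((g + 2 * d) / b))) ≤
      Real.exp ((2 / b) * Real.exp (2 * Δ / b) * d) *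
        Real.exp (-Real.exp (-(g / b))) :=
  stmt_0_general b Δ d g hb hd hg
end

section
/- Let Δ > 0, Δ₀ > 0, λ > 0 be real numbers, let n be a real number with n ≥ 1, let A and ε be real numbers with A = (2 + log n + λ)/Δ₀, and suppose w > 0 satisfies w · exp(w) = (2Δ/3) · (ε - A). Set b = 2Δ/w and assume 0 < b ≤ Δ₀. Then for every real d with d ≥ Δ₀: (1/d) · log(2·n·exp(exp(2Δ/b) + λ)) + (2/b) · exp(2Δ/b) ≤ ε. -/
/-! Since `b = 2Δ/w`, the Lambert equation `w e^w = (2Δ/3)(ε - A)` says exactly `e^{2Δ/b} = b(ε - A)/3`.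
So the second summand equals `2(ε - A)/3`, while the first is at most
`(2 + log n + λ + e^{2Δ/b}) / Δ₀ ≤ A + e^{2Δ/b}/b = A + (ε - A)/3`, using `log 2 ≤ 2`, `d ≥ Δ₀ ≥ b`. -/

open Real

lemma log_two_mul_mul_exp_le {n : ℝ} (hn : 0 < n) (t : ℝ) :
    log (2 * n * exp t) ≤ 2 + log n + t := by
  rw [log_mul (by positivity) (exp_ne_zero t), log_mul two_ne_zero hn.ne', log_exp]
  linarith [log_two_lt_d9]

section LambertCalibration

variable {a w b c : ℝ}

lemma div_eq_of_eq_div (hb : b = a / w) (hbpos : 0 < b) : a / b = w := by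
  rw [hb, div_div_cancel₀ (div_ne_zero_iff.mp (hb ▸ hbpos.ne')).1]

lemma exp_eq_of_mul_exp_eq (hW : w * exp w = (a / 3) * c) (hb : b = a / w) (hbpos : 0 < b) :
    exp w = b * c / 3 := by
  have hw : w ≠ 0 := (div_ne_zero_iff.mp (hb ▸ hbpos.ne')).2
  apply mul_left_cancel₀ hw
  rw [hW, hb]
  field_simp

end LambertCalibration

theorem stmt_8_general (Δ Δ₀ lam n A ε w : ℝ)
    (hlam : 0 < lam) (hn : 1 ≤ n) (hA : A = (2 + Real.log n + lam) / Δ₀)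
    (hW : w * Real.exp w = (2 * Δ / 3) * (ε - A)) (b : ℝ)
    (hb : b = 2 * Δ / w) (hbpos : 0 < b) (hble : b ≤ Δ₀) :
    ∀ d : ℝ, Δ₀ ≤ d →
      (1 / d) * Real.log (2 * n * Real.exp (Real.exp (2 * Δ / b) + lam)) +
        (2 / b) * Real.exp (2 * Δ / b) ≤ ε := by
  intro d hd
  have hΔ₀ : 0 < Δ₀ := hbpos.trans_le hble
  have hexp := exp_eq_of_mul_exp_eq hW hb hbpos
  rw [div_eq_of_eq_div hb hbpos]
  have hlog := log_two_mul_mul_exp_le (zero_lt_one.trans_le hn) (exp w + lam)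
  have hS : 0 ≤ 2 + log n + (exp w + lam) := by
    have := log_nonneg hn; positivity
  calc (1 / d) * log (2 * n * exp (exp w + lam)) + (2 / b) * exp w
      ≤ (2 + log n + (exp w + lam)) / Δ₀ + (2 / b) * exp w := by
        gcongr
        rw [one_div_mul_eq_div]
        exact (div_le_div_of_nonneg_right hlog (hΔ₀.trans_le hd).le).trans
          (div_le_div_of_nonneg_left hS hΔ₀ hd)
    _ ≤ A + exp w / b + (2 / b) * exp w := by
        rw [hA, ← add_assoc, add_right_comm, add_div]
        gcongr
    _ = ε := by
        rw [hexp]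
        field_simp
        ring

theorem stmt_8 (Δ Δ₀ lam n A ε w : ℝ) (hΔ : 0 < Δ) (hΔ₀ : 0 < Δ₀)
    (hlam : 0 < lam) (hn : 1 ≤ n) (hA : A = (2 + Real.log n + lam) / Δ₀)
    (hw : 0 < w) (hW : w * Real.exp w = (2 * Δ / 3) * (ε - A)) (b : ℝ)
    (hb : b = 2 * Δ / w) (hbpos : 0 < b) (hble : b ≤ Δ₀) :
    ∀ d : ℝ, Δ₀ ≤ d →
      (1 / d) * Real.log (2 * n * Real.exp (Real.exp (2 * Δ / b) + lam)) +
        (2 / b) * Real.exp (2 * Δ / b) ≤ ε :=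
  stmt_8_general Δ Δ₀ lam n A ε w hlam hn hA hW b hb hbpos hble
end

section
/- Let Δ > 0, Δ₀ > 0, λ > 0 be real numbers, let n be a real number with n ≥ 1, let A and ε be real numbers with A = (2 + log n + λ)/Δ₀ and (Δ₀/3)·(ε - A) > 1. Set b = 2Δ / log((Δ₀/3)·(ε - A)) and assume b ≥ Δ₀. Then for every real d with d ≥ Δ₀: (1/d) · log(2·n·exp(exp(2Δ/b) + λ)) + (2/b) · exp(2Δ/b) ≤ ε. -/
open Real

/- The calibration is chosen so that `exp (2Δ/b)` is exactly `E := (Δ₀/3)(ε - A)`. The privacy loss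
then becomes `(log 2 + log n + E + λ)/d + 2E/b`, and with `log 2 ≤ 1`, `d ≥ Δ₀` and `b ≥ Δ₀` it is at
most `(2 + log n + λ + 3E)/Δ₀ = A + 3E/Δ₀ = ε`. -/

lemma exp_div_div_log {c x : ℝ} (hc : c ≠ 0) (hx : 1 < x) : exp (c / (c / log x)) = x := by
  rw [div_div_cancel₀ hc, exp_log (by linarith)]

lemma log_two_mul_mul_exp {n : ℝ} (hn : 0 < n) (x : ℝ) :
    log (2 * n * exp x) = log 2 + log n + x := by
  rw [log_mul (by positivity) (exp_ne_zero x), log_mul two_ne_zero hn.ne', log_exp]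

lemma privacy_loss_le {Δ₀ d b L lam E : ℝ} (hΔ₀ : 0 < Δ₀) (hd : Δ₀ ≤ d) (hb : Δ₀ ≤ b)
    (hL : 0 ≤ L) (hlam : 0 ≤ lam) (hE : 0 ≤ E) :
    1 / d * (log 2 + L + (E + lam)) + 2 / b * E ≤ (2 + L + lam + 3 * E) / Δ₀ := by
  have hlog2 : log 2 ≤ 1 := by linarith [log_le_sub_one_of_pos (two_pos : (0 : ℝ) < 2)]
  have hloss : 1 / d * (log 2 + L + (E + lam)) ≤ 1 / Δ₀ * (2 + L + (E + lam)) :=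
    mul_le_mul (one_div_le_one_div_of_le hΔ₀ hd) (by linarith) (by positivity) (by positivity)
  have hscale : 2 / b * E ≤ 2 / Δ₀ * E :=
    mul_le_mul_of_nonneg_right (div_le_div_of_nonneg_left zero_le_two hΔ₀ hb) hE
  calc 1 / d * (log 2 + L + (E + lam)) + 2 / b * E
      ≤ 1 / Δ₀ * (2 + L + (E + lam)) + 2 / Δ₀ * E := add_le_add hloss hscale
    _ = (2 + L + lam + 3 * E) / Δ₀ := by field_simp; ring

theorem stmt_9 (Δ Δ₀ lam n A ε : ℝ) (hΔ : 0 < Δ) (hΔ₀ : 0 < Δ₀)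
    (hlam : 0 < lam) (hn : 1 ≤ n) (hA : A = (2 + Real.log n + lam) / Δ₀)
    (harg : 1 < (Δ₀ / 3) * (ε - A)) (b : ℝ)
    (hb : b = 2 * Δ / Real.log ((Δ₀ / 3) * (ε - A))) (hbge : Δ₀ ≤ b) :
    ∀ d : ℝ, Δ₀ ≤ d →
      (1 / d) * Real.log (2 * n * Real.exp (Real.exp (2 * Δ / b) + lam)) +
        (2 / b) * Real.exp (2 * Δ / b) ≤ ε := by
  intro d hd
  set E := (Δ₀ / 3) * (ε - A) with hE
  have hexp : exp (2 * Δ / b) = E := hb ▸ exp_div_div_log (by positivity) harg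
  have hε : ε = (2 + log n + lam + 3 * E) / Δ₀ := by
    rw [hE, hA]; field_simp; ring
  rw [hexp, log_two_mul_mul_exp (by linarith), hε]
  exact privacy_loss_le hΔ₀ hd hbge (log_nonneg hn) hlam.le (by linarith)
end
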